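/- Let X be a linearly ordered set. The operations m̃ and M̃ on ultrafilters over X are associative and idempotent and satisfy the absorption laws: m̃(u, M̃(u,v)) = u, M̃(u, m̃(u,v)) = u, m̃(M̃(u,v), v) = v, and M̃(m̃(u,v), v) = v, for all ultrafilters u, v over X (so the set of ultrafilters over X with these two operations is a skew lattice). -/
import Mathlib


/-- The ultrafilter extension of a binary relation `R` on `X`:
`u R̃ v` iff `{x | {y | R x y} ∈ v} ∈ u`. -/
def relExt {X : Type*} (R : X → X → Prop) (u v : Ultrafilter X) : Prop :=
  {x : X | {y : X | R x y} ∈ v} ∈ u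

/-- `I_u`: the intersection of all downward closed sets belonging to `u`. -/
def Iset {X : Type*} [LinearOrder X] (u : Ultrafilter X) : Set X :=
  ⋂₀ {I : Set X | I ∈ u ∧ ∀ ⦃a b : X⦄, a ≤ b → b ∈ I → a ∈ I}

/-- `J_u`: the intersection of all upward closed sets belonging to `u`. -/
def Jset {X : Type*} [LinearOrder X] (u : Ultrafilter X) : Set X :=
  ⋂₀ {J : Set X | J ∈ u ∧ ∀ ⦃a b : X⦄, a ≤ b → a ∈ J → b ∈ J}

/-- The ultrafilter extension of a binary operation `F` on `X`. -/
def opExt {X : Type*} (F : X → X → X) (u v : Ultrafilter X) : Ultrafilter X :=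
  u.bind (fun x => v.map (F x))

lemma mem_opExt {X : Type*} {F : X → X → X} {u v : Ultrafilter X} {s : Set X} :
    s ∈ opExt F u v ↔ {x | {y | F x y ∈ s} ∈ v} ∈ u := Iff.rfl

lemma uf_eq {X : Type*} {p q : Ultrafilter X} (h : ∀ s, s ∈ q → s ∈ p) : p = q := by
  ext s
  refine ⟨fun hs => ?_, h s⟩
  by_contra hns
  exact Ultrafilter.compl_mem_iff_notMem.mp
    (h sᶜ (Ultrafilter.compl_mem_iff_notMem.mpr hns)) hs

lemma opExt_assoc {X : Type*} {F : X → X → X}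
    (hF : ∀ a b c, F (F a b) c = F a (F b c)) (u v w : Ultrafilter X) :
    opExt F (opExt F u v) w = opExt F u (opExt F v w) := by
  ext s
  simp only [mem_opExt, Set.mem_setOf_eq, hF]

lemma opExt_idem {X : Type*} {F : X → X → X}
    (hF : ∀ a b, F a b = a ∨ F a b = b) (u : Ultrafilter X) :
    opExt F u u = u := by
  refine uf_eq fun s hs => ?_
  rw [mem_opExt]
  refine Filter.mem_of_superset hs fun x hx => ?_
  refine Filter.mem_of_superset hs fun y hy => ?_
  rcases hF x y with h | h <;> simp [Set.mem_setOf_eq, h, hx, hy]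

lemma opExt_absorb1 {X : Type*} {F G : X → X → X} (r : X → X → Prop)
    (htot : ∀ a b, r a b ∨ r b a)
    (hF : ∀ a b, F a b = a ∨ F a b = b)
    (h1 : ∀ x y c, r x c → F x (G y c) = x)
    (h2 : ∀ x y c, r c y → F x (G y c) = F x y)
    (u v : Ultrafilter X) : opExt F u (opExt G u v) = u := by
  refine uf_eq fun s hs => ?_
  rw [mem_opExt]
  by_cases hA : {x | {c | r x c} ∈ v} ∈ u
  · refine Filter.mem_of_superset (Filter.inter_mem hs hA) fun x hx => ?_
    refine Filter.mem_of_superset Filter.univ_mem fun y _ => ?_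
    show {c | F x (G y c) ∈ s} ∈ v
    refine Filter.mem_of_superset hx.2 fun c hc => ?_
    show F x (G y c) ∈ s
    rw [h1 x y c hc]
    exact hx.1
  · have hY : {y | {c | r c y} ∈ v} ∈ u := by
      by_contra hY
      have h1' : {x | {c | r x c} ∈ v}ᶜ ∈ u := Ultrafilter.compl_mem_iff_notMem.mpr hA
      have h2' : {y | {c | r c y} ∈ v}ᶜ ∈ u := Ultrafilter.compl_mem_iff_notMem.mpr hY
      obtain ⟨z, hz1, hz2⟩ := Ultrafilter.nonempty_of_mem (Filter.inter_mem h1' h2')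
      have : {c | r z c} ∪ {c | r c z} ∈ v :=
        Filter.mem_of_superset Filter.univ_mem fun c _ => htot z c
      rcases (Ultrafilter.union_mem_iff.mp this) with h | h
      exacts [hz1 h, hz2 h]
    refine Filter.mem_of_superset hs fun x hx => ?_
    refine Filter.mem_of_superset (Filter.inter_mem hs hY) fun y hy => ?_
    show {c | F x (G y c) ∈ s} ∈ v
    refine Filter.mem_of_superset hy.2 fun c hc => ?_
    show F x (G y c) ∈ s
    rw [h2 x y c hc]
    rcases hF x y with h | h <;> rw [h]
    exacts [hx, hy.1]

lemma opExt_absorb2 {X : Type*} {F G : X → X → X} (r : X → X → Prop)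
    (htot : ∀ a b, r a b ∨ r b a)
    (hF : ∀ a b, F a b = a ∨ F a b = b)
    (h1 : ∀ x y c, r c x → F (G x y) c = c)
    (h2 : ∀ x y, r x y → G x y = y)
    (u v : Ultrafilter X) : opExt F (opExt G u v) v = v := by
  refine uf_eq fun s hs => ?_
  rw [mem_opExt, mem_opExt]
  refine Filter.mem_of_superset Filter.univ_mem fun x _ => ?_
  show {y | {c | F (G x y) c ∈ s} ∈ v} ∈ v
  by_cases hC : {c | r c x} ∈ v
  · refine Filter.mem_of_superset Filter.univ_mem fun y _ => ?_
    show {c | F (G x y) c ∈ s} ∈ v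
    refine Filter.mem_of_superset (Filter.inter_mem hs hC) fun c hc => ?_
    show F (G x y) c ∈ s
    rw [h1 x y c hc.2]
    exact hc.1
  · have hC' : {c | ¬ r c x} ∈ v := Ultrafilter.compl_mem_iff_notMem.mpr hC
    refine Filter.mem_of_superset (Filter.inter_mem hs hC') fun y hy => ?_
    show {c | F (G x y) c ∈ s} ∈ v
    have hxy : r x y := (htot x y).resolve_right hy.2
    refine Filter.mem_of_superset hs fun c hc => ?_
    show F (G x y) c ∈ s
    rw [h2 x y hxy]
    rcases hF y c with h | h <;> rw [h]
    exacts [hy.1, hc]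

/-- `m̃` and `M̃` are associative, idempotent and satisfy the absorption laws,
so the ultrafilters over `X` form a skew lattice. -/
theorem stmt16 {X : Type*} [LinearOrder X] :
    (∀ u v w : Ultrafilter X,
      opExt min (opExt min u v) w = opExt min u (opExt min v w)) ∧
    (∀ u v w : Ultrafilter X,
      opExt max (opExt max u v) w = opExt max u (opExt max v w)) ∧
    (∀ u : Ultrafilter X, opExt min u u = u) ∧
    (∀ u : Ultrafilter X, opExt max u u = u) ∧
    (∀ u v : Ultrafilter X, opExt min u (opExt max u v) = u) ∧
    (∀ u v : Ultrafilter X, opExt max u (opExt min u v) = u) ∧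
    (∀ u v : Ultrafilter X, opExt min (opExt max u v) v = v) ∧
    (∀ u v : Ultrafilter X, opExt max (opExt min u v) v = v) := by
  refine ⟨opExt_assoc min_assoc, opExt_assoc max_assoc,
    opExt_idem min_choice, opExt_idem max_choice,
    opExt_absorb1 (· ≤ ·) le_total min_choice
      (fun x y c h => min_eq_left (h.trans (le_max_right y c)))
      (fun x y c h => by rw [max_eq_left h]),
    opExt_absorb1 (fun a b => b ≤ a) (fun a b => le_total b a) max_choice
      (fun x y c h => max_eq_left ((min_le_right y c).trans h))
      (fun x y c h => by rw [min_eq_left h]),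
    opExt_absorb2 (· ≤ ·) le_total min_choice
      (fun x y c h => min_eq_right (h.trans (le_max_left x y)))
      (fun x y h => max_eq_right h),
    opExt_absorb2 (fun a b => b ≤ a) (fun a b => le_total b a) max_choice
      (fun x y c h => max_eq_right ((min_le_left x y).trans h))
      (fun x y h => min_eq_right h)⟩
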